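/- arXiv:1101.4725 — 6 statements merged into one kernel-verified Lean document; each statement's English description precedes it below -/
import Mathlib

section
/- For positive integers N, l with l < N, and for all real ξ, the sum ∑_{j=0}^{l} C(N-1+j, j) sin^{2j}(ξ/2) equals ∑_{j=0}^{l} C(N+l, j) sin^{2j}(ξ/2) cos^{2(l-j)}(ξ/2). -/
/-! With `s = sin² (ξ/2)` and `cos² (ξ/2) = 1 - s` this is a polynomial identity in `s`, proved
by induction on `l`: by Pascal's rule, raising both the degree `l` and the top index `k` of the
truncated binomial sum `∑_{i+j=l} C(k,i) s^i (1-s)^j` by one adds exactly `C(k,l+1) s^(l+1)`,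
which is the term the left-hand side gains. -/

open Real Finset

namespace Finset.Nat

variable {R : Type*} [CommRing R]

theorem sum_antidiagonal_succ_choose_succ_mul_pow (k l : ℕ) (x y : R) :
    ∑ p ∈ antidiagonal (l + 1), ((k + 1).choose p.1 : R) * x ^ p.1 * y ^ p.2 =
      (x + y) * ∑ p ∈ antidiagonal l, (k.choose p.1 : R) * x ^ p.1 * y ^ p.2 +
        k.choose (l + 1) * x ^ (l + 1) := by
  -- both sides are the degree-`(l+1)` sum with top index `k`, peeled off at opposite ends
  have hshift :
      y ^ (l + 1) + ∑ p ∈ antidiagonal l, (k.choose (p.1 + 1) : R) * x ^ (p.1 + 1) * y ^ p.2 =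
        y * ∑ p ∈ antidiagonal l, (k.choose p.1 : R) * x ^ p.1 * y ^ p.2 +
        k.choose (l + 1) * x ^ (l + 1) := by
    calc _ = ∑ p ∈ antidiagonal (l + 1), (k.choose p.1 : R) * x ^ p.1 * y ^ p.2 := by
          simp [sum_antidiagonal_succ]
      _ = _ := by
          rw [sum_antidiagonal_succ', mul_sum, add_comm]
          simp only [pow_zero, mul_one]
          congr 1
          exact sum_congr rfl fun p _ => by ring
  calc _ = x * ∑ p ∈ antidiagonal l, (k.choose p.1 : R) * x ^ p.1 * y ^ p.2 +
        (y ^ (l + 1) +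
          ∑ p ∈ antidiagonal l, (k.choose (p.1 + 1) : R) * x ^ (p.1 + 1) * y ^ p.2) := by
        simp only [sum_antidiagonal_succ, Nat.choose_succ_succ, Nat.cast_add, add_mul,
          sum_add_distrib, Nat.choose_zero_right, Nat.cast_one, pow_zero, one_mul, mul_sum]
        rw [add_left_comm]
        congr 1
        exact sum_congr rfl fun p _ => by ring
    _ = _ := by rw [hshift]; ring

theorem sum_range_choose_add_mul_pow_eq_sum_antidiagonal (n l : ℕ) (s : R) :
    ∑ j ∈ range (l + 1), ((n + j).choose j : R) * s ^ j =
      ∑ p ∈ antidiagonal l, ((n + 1 + l).choose p.1 : R) * s ^ p.1 * (1 - s) ^ p.2 := by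
  induction l with
  | zero => simp
  | succ l ih =>
    rw [sum_range_succ, ih, ← add_assoc (n + 1) l 1, sum_antidiagonal_succ_choose_succ_mul_pow,
      add_sub_cancel, one_mul, ← add_assoc, add_right_comm n l 1]

end Finset.Nat

theorem pseudo_spline_mask_identity_general (N l : ℕ) (hlN : l < N) (ξ : ℝ) :
    ∑ j ∈ range (l + 1), ((N - 1 + j).choose j : ℝ) * Real.sin (ξ / 2) ^ (2 * j) =
      ∑ j ∈ range (l + 1), ((N + l).choose j : ℝ) * Real.sin (ξ / 2) ^ (2 * j) *
        Real.cos (ξ / 2) ^ (2 * (l - j)) := by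
  obtain ⟨n, rfl⟩ : ∃ n, N = n + 1 := ⟨N - 1, by omega⟩
  simp only [pow_mul, cos_sq', Nat.add_sub_cancel]
  rw [Nat.sum_range_choose_add_mul_pow_eq_sum_antidiagonal,
    Nat.sum_antidiagonal_eq_sum_range_succ (fun i j => ((n + 1 + l).choose i : ℝ) *
      (sin (ξ / 2) ^ 2) ^ i * (1 - sin (ξ / 2) ^ 2) ^ j)]

theorem pseudo_spline_mask_identity (N l : ℕ) (hl : 0 < l) (hlN : l < N) (ξ : ℝ) :
    ∑ j ∈ range (l + 1), ((N - 1 + j).choose j : ℝ) * Real.sin (ξ / 2) ^ (2 * j) =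
      ∑ j ∈ range (l + 1), ((N + l).choose j : ℝ) * Real.sin (ξ / 2) ^ (2 * j) *
        Real.cos (ξ / 2) ^ (2 * (l - j)) :=
  pseudo_spline_mask_identity_general N l hlN ξ
end

section
/- For positive integers N, l with l < N, let â(ξ) = cos^{2N}(ξ/2) · P_{N,l}(sin²(ξ/2)) where P_{N,l}(x) = ∑_{j=0}^{l} C(N-1+j,j) x^j. Then for all real ξ, |â(ξ)| ≥ 1 − C₁|ξ|^{2l+2}, where C₁ = (∑_{j=l+1}^{N+l} C(N+l,j)) / 2^{2l+2}. -/
open Real Finset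

private lemma key_ident (N : ℕ) (hN : 1 ≤ N) (s c : ℝ) (h : c + s = 1) (l : ℕ) :
    c ^ N * ∑ j ∈ range (l + 1), ((N - 1 + j).choose j : ℝ) * s ^ j =
      ∑ j ∈ range (l + 1), ((N + l).choose j : ℝ) * s ^ j * c ^ (N + l - j) := by
  induction l with
  | zero => simp
  | succ l ih =>
    have hrec : ∑ j ∈ range (l + 2), ((N + (l + 1)).choose j : ℝ) * s ^ j * c ^ (N + (l + 1) - j)
        = (∑ j ∈ range (l + 1), ((N + l).choose j : ℝ) * s ^ j * c ^ (N + l - j))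
          + ((N + l).choose (l + 1) : ℝ) * s ^ (l + 1) * c ^ N := by
      have h1 : ∀ j ∈ range (l + 2), ((N + (l + 1)).choose j : ℝ) * s ^ j * c ^ (N + (l + 1) - j)
          = ((N + l).choose j : ℝ) * s ^ j * c ^ (N + (l + 1) - j)
            + ((N + l).choose (j - 1) : ℝ) * s ^ j * c ^ (N + (l + 1) - j) * (if j = 0 then 0 else 1) := by
        intro j hj
        rcases Nat.eq_zero_or_pos j with h0 | h0
        · subst h0; simp
        · obtain ⟨k, rfl⟩ := Nat.exists_eq_succ_of_ne_zero h0.ne'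
          have : (N + (l + 1)).choose (k + 1) = (N + l).choose k + (N + l).choose (k + 1) := by
            rw [show N + (l + 1) = (N + l) + 1 by ring, Nat.choose_succ_succ]
          rw [this]
          push_cast
          simp
          ring
      rw [Finset.sum_congr rfl h1, Finset.sum_add_distrib]
      have hA : ∑ j ∈ range (l + 2), ((N + l).choose j : ℝ) * s ^ j * c ^ (N + (l + 1) - j)
          = (∑ j ∈ range (l + 1), ((N + l).choose j : ℝ) * s ^ j * (c * c ^ (N + l - j)))
            + ((N + l).choose (l + 1) : ℝ) * s ^ (l + 1) * c ^ N := by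
        rw [Finset.sum_range_succ]
        congr 1
        · apply Finset.sum_congr rfl
          intro j hj
          simp only [Finset.mem_range] at hj
          have : N + (l + 1) - j = (N + l - j) + 1 := by omega
          rw [this, pow_succ]
          ring
        · have h2 : N + (l + 1) - (l + 1) = N := by omega
          rw [h2]
      have hB : ∑ j ∈ range (l + 2), ((N + l).choose (j - 1) : ℝ) * s ^ j * c ^ (N + (l + 1) - j) * (if j = 0 then 0 else 1)
          = ∑ j ∈ range (l + 1), ((N + l).choose j : ℝ) * (s * s ^ j) * c ^ (N + l - j) := by
        rw [Finset.sum_range_succ']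
        rw [show ((N + l).choose (0 - 1) : ℝ) * s ^ 0 * c ^ (N + (l + 1) - 0) * (if (0:ℕ) = 0 then (0:ℝ) else 1) = 0 by simp]
        rw [add_zero]
        apply Finset.sum_congr rfl
        intro j hj
        have e1 : N + (l + 1) - (j + 1) = N + l - j := by omega
        simp only [Nat.add_sub_cancel, e1, if_neg (Nat.succ_ne_zero j), mul_one]
        rw [pow_succ]
        ring
      rw [hA, hB]
      have hcomb : (∑ j ∈ range (l + 1), ((N + l).choose j : ℝ) * s ^ j * (c * c ^ (N + l - j)))
          + (∑ j ∈ range (l + 1), ((N + l).choose j : ℝ) * (s * s ^ j) * c ^ (N + l - j))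
          = ∑ j ∈ range (l + 1), ((N + l).choose j : ℝ) * s ^ j * c ^ (N + l - j) * (c + s) := by
        rw [← Finset.sum_add_distrib]
        apply Finset.sum_congr rfl
        intro j hj; ring
      rw [add_right_comm, hcomb, h]
      simp
    rw [hrec, ← ih, Finset.sum_range_succ]
    have : N - 1 + (l + 1) = N + l := by omega
    rw [this]
    ring

theorem pseudo_spline_mask_lower_bound (N l : ℕ) (hl : 0 < l) (hlN : l < N) (ξ : ℝ) :
    |Real.cos (ξ / 2) ^ (2 * N) *
        ∑ j ∈ range (l + 1), ((N - 1 + j).choose j : ℝ) * Real.sin (ξ / 2) ^ (2 * j)| ≥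
      1 - ((∑ j ∈ Finset.Icc (l + 1) (N + l), ((N + l).choose j : ℝ)) / 2 ^ (2 * l + 2)) *
        |ξ| ^ (2 * l + 2) := by
  set s : ℝ := Real.sin (ξ / 2) ^ 2 with hs
  set c : ℝ := Real.cos (ξ / 2) ^ 2 with hc
  have hcs : c + s = 1 := by rw [hc, hs, add_comm]; exact Real.sin_sq_add_cos_sq _
  have hs0 : 0 ≤ s := sq_nonneg _
  have hc0 : 0 ≤ c := sq_nonneg _
  have hs1 : s ≤ 1 := by linarith
  have hc1 : c ≤ 1 := by linarith
  have hrw : Real.cos (ξ / 2) ^ (2 * N) *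
        ∑ j ∈ range (l + 1), ((N - 1 + j).choose j : ℝ) * Real.sin (ξ / 2) ^ (2 * j)
      = c ^ N * ∑ j ∈ range (l + 1), ((N - 1 + j).choose j : ℝ) * s ^ j := by
    rw [hc, hs, pow_mul]
    congr 1
    exact Finset.sum_congr rfl fun j _ => by rw [pow_mul]
  rw [hrw, key_ident N (by omega) s c hcs l]
  -- expand 1 as binomial sum
  have hone : (1:ℝ) = ∑ j ∈ range (N + l + 1), ((N + l).choose j : ℝ) * s ^ j * c ^ (N + l - j) := by
    have := add_pow s c (N + l)
    rw [show s + c = 1 by linarith, one_pow] at this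
    rw [this]
    exact Finset.sum_congr rfl fun j _ => by ring
  have hsplit : ∑ j ∈ range (N + l + 1), ((N + l).choose j : ℝ) * s ^ j * c ^ (N + l - j)
      = (∑ j ∈ range (l + 1), ((N + l).choose j : ℝ) * s ^ j * c ^ (N + l - j))
        + ∑ j ∈ Finset.Icc (l + 1) (N + l), ((N + l).choose j : ℝ) * s ^ j * c ^ (N + l - j) := by
    rw [Finset.range_eq_Ico, ← Finset.sum_Ico_consecutive _ (Nat.zero_le (l + 1)) (by omega),
      ← Finset.range_eq_Ico, Finset.Ico_add_one_right_eq_Icc]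
  have htail : ∑ j ∈ Finset.Icc (l + 1) (N + l), ((N + l).choose j : ℝ) * s ^ j * c ^ (N + l - j)
      ≤ (∑ j ∈ Finset.Icc (l + 1) (N + l), ((N + l).choose j : ℝ)) * s ^ (l + 1) := by
    rw [Finset.sum_mul]
    apply Finset.sum_le_sum
    intro j hj
    simp only [Finset.mem_Icc] at hj
    have h1 : s ^ j ≤ s ^ (l + 1) := pow_le_pow_of_le_one hs0 hs1 hj.1
    have h2 : c ^ (N + l - j) ≤ 1 := pow_le_one₀ hc0 hc1
    calc ((N + l).choose j : ℝ) * s ^ j * c ^ (N + l - j)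
        ≤ ((N + l).choose j : ℝ) * s ^ (l + 1) * 1 := by
          apply mul_le_mul _ h2 (pow_nonneg hc0 _) (by positivity)
          exact mul_le_mul_of_nonneg_left h1 (Nat.cast_nonneg _)
      _ = ((N + l).choose j : ℝ) * s ^ (l + 1) := by ring
  have hspow : s ^ (l + 1) ≤ |ξ| ^ (2 * l + 2) / 2 ^ (2 * l + 2) := by
    have h1 : s ≤ |ξ| ^ 2 / 2 ^ 2 := by
      have h2 := Real.sin_sq_le_sq (x := ξ / 2)
      rw [hs]
      calc Real.sin (ξ / 2) ^ 2 ≤ (ξ / 2) ^ 2 := h2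
        _ = |ξ| ^ 2 / 2 ^ 2 := by rw [div_pow, sq_abs]
    calc s ^ (l + 1) ≤ (|ξ| ^ 2 / 2 ^ 2) ^ (l + 1) := pow_le_pow_left₀ hs0 h1 _
      _ = |ξ| ^ (2 * l + 2) / 2 ^ (2 * l + 2) := by
          rw [div_pow, ← pow_mul, ← pow_mul, show 2 * (l + 1) = 2 * l + 2 by ring]
  have hCnn : (0:ℝ) ≤ ∑ j ∈ Finset.Icc (l + 1) (N + l), ((N + l).choose j : ℝ) :=
    Finset.sum_nonneg fun j _ => Nat.cast_nonneg _
  have hmain : (∑ j ∈ range (l + 1), ((N + l).choose j : ℝ) * s ^ j * c ^ (N + l - j))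
      ≥ 1 - ((∑ j ∈ Finset.Icc (l + 1) (N + l), ((N + l).choose j : ℝ)) / 2 ^ (2 * l + 2)) *
        |ξ| ^ (2 * l + 2) := by
    have h3 : (∑ j ∈ Finset.Icc (l + 1) (N + l), ((N + l).choose j : ℝ)) * s ^ (l + 1)
        ≤ (∑ j ∈ Finset.Icc (l + 1) (N + l), ((N + l).choose j : ℝ)) *
          (|ξ| ^ (2 * l + 2) / 2 ^ (2 * l + 2)) := mul_le_mul_of_nonneg_left hspow hCnn
    have h4 : (∑ j ∈ Finset.Icc (l + 1) (N + l), ((N + l).choose j : ℝ)) *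
          (|ξ| ^ (2 * l + 2) / 2 ^ (2 * l + 2))
        = ((∑ j ∈ Finset.Icc (l + 1) (N + l), ((N + l).choose j : ℝ)) / 2 ^ (2 * l + 2)) *
          |ξ| ^ (2 * l + 2) := by ring
    nlinarith [hone, hsplit, htail]
  exact le_trans hmain (le_abs_self _)
end

section
/- For positive integers N, l with l < N, let â(ξ) be the mask of the pseudo spline of type II with order (N,l) and let b̂(ξ) = e^{-iξ} · conj(â(ξ+π)). Then for all real ξ, |b̂(ξ)| ≤ min{1, (∑_{j=0}^{l} C(N+l,j)) · |ξ|^{2N} / 2^{2N}}. -/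
/-!
With `s = sin²(ξ/2)` and `c = cos²(ξ/2) = 1 - s`, the modulus of the high-pass mask at `ξ` is
`â(ξ + π) = s^N ∑_{j ≤ l} C(N-1+j, j) c^j`. This is a partial sum of the negative binomial
expansion of `s^N (1 - c)^{-N} = 1`, hence at most `1`; and since `c ≤ 1` and `s ≤ (ξ/2)²` it
is also at most `(ξ/2)^{2N} ∑_{j ≤ l} C(N+l, j)`.
-/

open Real Finset Complex

noncomputable def pseudoMaskII (N l : ℕ) (ξ : ℝ) : ℝ :=
  Real.cos (ξ / 2) ^ (2 * N) *
    ∑ j ∈ Finset.range (l + 1), ((N - 1 + j).choose j : ℝ) * Real.sin (ξ / 2) ^ (2 * j)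

/- Truncation of the negative binomial series `∑ₙ C(k + n, n) rⁿ = (1 - r)⁻⁽ᵏ⁺¹⁾`. -/
lemma one_sub_pow_mul_sum_range_choose_mul_pow_le_one (k l : ℕ) {r : ℝ} (h0 : 0 ≤ r)
    (h1 : r ≤ 1) : (1 - r) ^ (k + 1) * ∑ j ∈ range l, ((k + j).choose j : ℝ) * r ^ j ≤ 1 := by
  rcases h1.lt_or_eq with h1 | rfl
  · have hseries : HasSum (fun j ↦ ((k + j).choose j : ℝ) * r ^ j) (1 / (1 - r) ^ (k + 1)) :=
      (hasSum_choose_mul_geometric_of_norm_lt_one k (r := r)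
        (by rwa [Real.norm_of_nonneg h0])).congr_fun fun j ↦ by rw [add_comm k, Nat.choose_symm_add]
    have hpartial := sum_le_hasSum (range l) (fun j _ ↦ by positivity) hseries
    rwa [le_div_iff₀' (pow_pos (sub_pos.2 h1) _)] at hpartial
  · simp

lemma sum_range_choose_mul_pow_le_sum_range_choose {n m : ℕ} (l : ℕ) (h : n + l ≤ m) {r : ℝ}
    (h0 : 0 ≤ r) (h1 : r ≤ 1) :
    ∑ j ∈ range (l + 1), ((n + j).choose j : ℝ) * r ^ j ≤
      ∑ j ∈ range (l + 1), (m.choose j : ℝ) := by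
  refine sum_le_sum fun j hj ↦ ?_
  have hj : j ≤ l := Nat.lt_succ_iff.1 (mem_range.1 hj)
  calc ((n + j).choose j : ℝ) * r ^ j ≤ (m.choose j : ℝ) * 1 :=
        mul_le_mul (by exact_mod_cast Nat.choose_le_choose j (by omega)) (pow_le_one₀ h0 h1)
          (by positivity) (by positivity)
    _ = m.choose j := mul_one _

lemma pseudoMaskII_add_pi (N l : ℕ) (ξ : ℝ) :
    pseudoMaskII N l (ξ + π) = (Real.sin (ξ / 2) ^ 2) ^ N *
      ∑ j ∈ range (l + 1), ((N - 1 + j).choose j : ℝ) * (Real.cos (ξ / 2) ^ 2) ^ j := by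
  rw [pseudoMaskII, add_div, Real.cos_add_pi_div_two, Real.sin_add_pi_div_two]
  simp only [pow_mul, neg_sq]

lemma sin_half_sq_pow_le (N : ℕ) (ξ : ℝ) :
    (Real.sin (ξ / 2) ^ 2) ^ N ≤ |ξ| ^ (2 * N) / 2 ^ (2 * N) := by
  calc (Real.sin (ξ / 2) ^ 2) ^ N ≤ ((ξ / 2) ^ 2) ^ N :=
        pow_le_pow_left₀ (sq_nonneg _) Real.sin_sq_le_sq N
    _ = |ξ| ^ (2 * N) / 2 ^ (2 * N) := by
      rw [← pow_mul, div_pow, (even_two_mul N).pow_abs]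

theorem highpass_mask_upper_bound_general (N l : ℕ) (hlN : l < N) (ξ : ℝ) :
    ‖Complex.exp (-Complex.I * ξ) * (starRingEnd ℂ) ((pseudoMaskII N l (ξ + π) : ℂ))‖ ≤
      min 1 ((∑ j ∈ Finset.range (l + 1), ((N + l).choose j : ℝ)) * |ξ| ^ (2 * N) / 2 ^ (2 * N)) := by
  have hmask := pseudoMaskII_add_pi N l ξ
  have hc0 : 0 ≤ Real.cos (ξ / 2) ^ 2 := sq_nonneg _
  have hc1 : Real.cos (ξ / 2) ^ 2 ≤ 1 := Real.cos_sq_le_one _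
  have hnorm : ‖Complex.exp (-Complex.I * ξ) * (starRingEnd ℂ) ((pseudoMaskII N l (ξ + π) : ℂ))‖
      = pseudoMaskII N l (ξ + π) := by
    rw [norm_mul, Complex.norm_exp, Complex.norm_conj, Complex.norm_real, Real.norm_of_nonneg]
    · simp
    · rw [hmask]; positivity
  rw [hnorm, hmask]
  refine le_min ?_ ?_
  · obtain ⟨k, rfl⟩ : ∃ k, N = k + 1 := ⟨N - 1, by omega⟩
    simpa [← Real.sin_sq] using one_sub_pow_mul_sum_range_choose_mul_pow_le_one k (l + 1) hc0 hc1
  · calc _ ≤ |ξ| ^ (2 * N) / 2 ^ (2 * N) * ∑ j ∈ range (l + 1), ((N + l).choose j : ℝ) :=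
          mul_le_mul (sin_half_sq_pow_le N ξ)
            (sum_range_choose_mul_pow_le_sum_range_choose l (by omega) hc0 hc1)
            (by positivity) (by positivity)
      _ = _ := by ring

theorem highpass_mask_upper_bound (N l : ℕ) (hl : 0 < l) (hlN : l < N) (ξ : ℝ) :
    ‖Complex.exp (-Complex.I * ξ) * (starRingEnd ℂ) ((pseudoMaskII N l (ξ + π) : ℂ))‖ ≤
      min 1 ((∑ j ∈ Finset.range (l + 1), ((N + l).choose j : ℝ)) * |ξ| ^ (2 * N) / 2 ^ (2 * N)) :=
  highpass_mask_upper_bound_general N l hlN ξ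
end

section
/- Let N, l be positive integers with l < N, let â be the mask of the pseudo spline of type II with order (N,l) and φ̂(ξ) = ∏_{k=1}^{∞} â(2^{-k}ξ). Let K ⊂ [−π,π] be a bounded set and ξ₀ a point of K maximizing |ξ|. Then there exists a constant C₄ > 0 (explicitly C₄ = ∏_{k=1}^{k₀} |â(2^{-k}ξ₀)| · exp(−C₁ 2^{-k₀+1} |ξ₀|^{2l+2}) for suitable k₀) such that |φ̂(ξ)| ≥ C₄ for all ξ ∈ K. -/
open Real Finset

noncomputable def pseudoSplineFT (N l : ℕ) (ξ : ℝ) : ℝ :=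
  ∏' j : ℕ, pseudoMaskII N l (ξ / 2 ^ (j + 1))

/-!
In the variable `y = sin² (ξ / 2)` the mask is `G y = (1 - y) ^ N * ∑_{j ≤ l} C(N-1+j, j) y ^ j`,
and induction on `l` gives `G' y = -(l + 1) C(N+l, l+1) y ^ l (1 - y) ^ (N - 1)`. Hence `G`
decreases from `G 0 = 1` on `[0, 1]` and `G y ≥ 1 - C(N+l, l+1) y ^ (l + 1)`; as `y ≤ ξ² / 4`,
the mask `â` is positive on `(-π, π)`, at most `1`, decreasing in `|ξ|` on `[-π, π]`, and
`â ξ ≥ 1 - C₁ |ξ| ^ (2l+2)`.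

Split `φ̂ ξ = ∏_{k ≤ k₀} â (ξ / 2^k) * ∏_{k > k₀} â (ξ / 2^k)`. The head dominates the same
product at `ξ₀` by monotonicity. Once `C₁ |ξ₀| ^ (2l+2) ≤ 2 ^ k₀`, each tail factor is at least
`1 - x_k ≥ exp (-2 x_k)` with `x_k ≤ C₁ |ξ₀| ^ (2l+2) / 2 ^ k ≤ 1 / 2`, and summing the geometric
series bounds the tail below by `exp (-C₁ 2 ^ (1 - k₀) |ξ₀| ^ (2l+2))`.
-/

noncomputable def pseudoMaskPoly (N l : ℕ) (y : ℝ) : ℝ :=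
  (1 - y) ^ N * ∑ j ∈ range (l + 1), ((N - 1 + j).choose j : ℝ) * y ^ j

namespace pseudoMaskPoly

lemma apply_zero (N l : ℕ) : pseudoMaskPoly N l 0 = 1 := by
  simp [pseudoMaskPoly, sum_range_succ']

lemma succ_right (M l : ℕ) :
    pseudoMaskPoly (M + 1) (l + 1) = fun y => pseudoMaskPoly (M + 1) l y +
      ((M + 1 + l).choose (l + 1) : ℝ) * (y ^ (l + 1) * (1 - y) ^ (M + 1)) := by
  ext y
  simp only [pseudoMaskPoly, sum_range_succ _ (l + 1), add_tsub_cancel_right]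
  ring_nf

lemma hasDerivAt (M l : ℕ) (y : ℝ) :
    HasDerivAt (pseudoMaskPoly (M + 1) l)
      (-(((l + 1) * (M + 1 + l).choose (l + 1) : ℕ) : ℝ) * (y ^ l * (1 - y) ^ M)) y := by
  have hsub : HasDerivAt (fun y : ℝ => 1 - y) (-1) y := by
    simpa using (hasDerivAt_id y).const_sub 1
  induction l with
  | zero =>
    have hpoly : pseudoMaskPoly (M + 1) 0 = fun y => (1 - y) ^ (M + 1) := by
      ext y; simp [pseudoMaskPoly]
    rw [hpoly]
    refine (hsub.pow (M + 1)).congr_deriv ?_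
    simp only [zero_add, add_zero, Nat.choose_one_right, pow_zero, Nat.add_sub_cancel]
    push_cast
    ring
  | succ l ih =>
    rw [succ_right]
    refine (ih.add (((hasDerivAt_pow (l + 1) y).mul (hsub.pow (M + 1))).const_mul _)).congr_deriv ?_
    have hchoose := Nat.add_one_mul_choose_eq (M + 1 + l) (l + 1)
    rw [show M + 1 + (l + 1) = M + 1 + l + 1 by ring, mul_comm (l + 1 + 1), ← hchoose]
    push_cast
    simp only [Pi.pow_apply]
    ring

lemma antitoneOn {N : ℕ} (hN : 0 < N) (l : ℕ) :
    AntitoneOn (pseudoMaskPoly N l) (Set.Icc 0 1) := by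
  obtain ⟨M, rfl⟩ := Nat.exists_eq_add_one_of_ne_zero hN.ne'
  refine antitoneOn_of_hasDerivWithinAt_nonpos (convex_Icc 0 1)
    (fun y _ => (hasDerivAt M l y).continuousAt.continuousWithinAt)
    (fun y _ => (hasDerivAt M l y).hasDerivWithinAt) fun y hy => ?_
  rw [interior_Icc] at hy
  rw [neg_mul]
  exact neg_nonpos.2 (mul_nonneg (Nat.cast_nonneg _)
    (mul_nonneg (pow_nonneg hy.1.le l) (pow_nonneg (sub_nonneg.2 hy.2.le) M)))

lemma one_sub_le {N : ℕ} (hN : 0 < N) (l : ℕ) {y : ℝ} (hy : y ∈ Set.Icc (0 : ℝ) 1) :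
    1 - ((N + l).choose (l + 1) : ℝ) * y ^ (l + 1) ≤ pseudoMaskPoly N l y := by
  obtain ⟨M, rfl⟩ := Nat.exists_eq_add_one_of_ne_zero hN.ne'
  set c : ℝ := ((M + 1 + l).choose (l + 1) : ℝ)
  have hderiv : ∀ x, HasDerivAt (fun x => pseudoMaskPoly (M + 1) l x + c * x ^ (l + 1))
      ((l + 1) * c * x ^ l * (1 - (1 - x) ^ M)) x := by
    intro x
    refine ((hasDerivAt M l x).add ((hasDerivAt_pow (l + 1) x).const_mul c)).congr_deriv ?_
    push_cast
    ring
  have hmono : MonotoneOn (fun x => pseudoMaskPoly (M + 1) l x + c * x ^ (l + 1))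
      (Set.Icc 0 1) :=
    monotoneOn_of_hasDerivWithinAt_nonneg (convex_Icc 0 1)
      (fun x _ => (hderiv x).continuousAt.continuousWithinAt)
      (fun x _ => (hderiv x).hasDerivWithinAt) fun x hx => by
        rw [interior_Icc] at hx
        have hpow : (1 - x) ^ M ≤ 1 := pow_le_one₀ (by linarith [hx.2]) (by linarith [hx.1])
        exact mul_nonneg (mul_nonneg (by positivity) (pow_nonneg hx.1.le l)) (sub_nonneg.2 hpow)
  have h := hmono ⟨le_rfl, zero_le_one⟩ hy hy.1
  simp only [apply_zero, zero_pow (Nat.succ_ne_zero l), mul_zero, add_zero] at h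
  linarith

end pseudoMaskPoly

lemma exp_neg_two_mul_le_one_sub {x : ℝ} (hx0 : 0 ≤ x) (hx : x ≤ 1 / 2) :
    exp (-(2 * x)) ≤ 1 - x := by
  have h1x : 0 < 1 - x := by linarith
  have hinv : (1 - x)⁻¹ ≤ 1 + 2 * x := by
    rw [inv_le_iff_one_le_mul₀' h1x]
    nlinarith
  rw [← le_log_iff_exp_le h1x]
  linarith [one_sub_inv_le_log_of_pos h1x]

section ExpLowerBound

variable {ι : Type*} {f u : ι → ℝ}

lemma summable_log_of_exp_neg_le (hu : Summable u) (hfu : ∀ i, exp (-u i) ≤ f i)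
    (hf1 : ∀ i, f i ≤ 1) : Summable fun i => log (f i) := by
  refine hu.of_norm_bounded fun i => ?_
  have hpos : 0 < f i := (exp_pos _).trans_le (hfu i)
  rw [Real.norm_eq_abs, abs_of_nonpos (log_nonpos hpos.le (hf1 i)), neg_le]
  simpa using log_le_log (exp_pos _) (hfu i)

lemma multipliable_of_exp_neg_le (hu : Summable u) (hfu : ∀ i, exp (-u i) ≤ f i)
    (hf1 : ∀ i, f i ≤ 1) : Multipliable f :=
  multipliable_of_summable_log (fun i => (exp_pos _).trans_le (hfu i))
    (summable_log_of_exp_neg_le hu hfu hf1)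

lemma exp_neg_tsum_le_tprod (hu : Summable u) (hfu : ∀ i, exp (-u i) ≤ f i)
    (hf1 : ∀ i, f i ≤ 1) : exp (-∑' i, u i) ≤ ∏' i, f i := by
  have hlog := summable_log_of_exp_neg_le hu hfu hf1
  rw [← rexp_tsum_eq_tprod (fun i => (exp_pos _).trans_le (hfu i)) hlog, exp_le_exp, ← tsum_neg]
  exact hu.neg.tsum_le_tsum (fun i => by simpa using log_le_log (exp_pos _) (hfu i)) hlog

end ExpLowerBound

lemma abs_div_two_pow_lt_pi {ξ : ℝ} (hξ : |ξ| ≤ π) {n : ℕ} (hn : n ≠ 0) :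
    |ξ / 2 ^ n| < π := by
  rw [abs_div, abs_pow, abs_two]
  exact (div_le_div_of_nonneg_right hξ (pow_pos two_pos n).le).trans_lt
    (div_lt_self pi_pos (one_lt_pow₀ one_lt_two hn))

section Dyadic

variable {a : ℝ → ℝ} {C : ℝ} {p : ℕ}

lemma mul_abs_div_two_pow_pow_le (hC : 0 ≤ C) (hp : p ≠ 0) (ξ : ℝ) (n : ℕ) :
    C * |ξ / 2 ^ n| ^ p ≤ C * |ξ| ^ p / 2 ^ n := by
  rw [abs_div, abs_pow, abs_two, div_pow, mul_div_assoc]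
  gcongr
  exact le_self_pow₀ (one_le_pow₀ one_le_two) hp

lemma exp_neg_le_apply_div_two_pow (hC : 0 ≤ C) (hp : p ≠ 0)
    (ha : ∀ ξ, 1 - C * |ξ| ^ p ≤ a ξ) {k : ℕ} {ξ R : ℝ} (hξR : |ξ| ≤ R)
    (hR : C * R ^ p ≤ 2 ^ k) (j : ℕ) :
    exp (-(2 * C * R ^ p / 2 ^ k / 2 / 2 ^ j)) ≤ a (ξ / 2 ^ (j + k + 1)) := by
  set x := C * |ξ / 2 ^ (j + k + 1)| ^ p
  have hx : x ≤ C * R ^ p / 2 ^ (j + k + 1) :=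
    (mul_abs_div_two_pow_pow_le hC hp ξ _).trans (by gcongr)
  have hx_half : x ≤ 1 / 2 := by
    refine hx.trans ?_
    rw [div_le_iff₀ (by positivity)]
    calc C * R ^ p ≤ 2 ^ k := hR
      _ ≤ 1 / 2 * 2 ^ (j + k + 1) := by
        rw [pow_succ, pow_add]
        nlinarith [one_le_pow₀ (one_le_two (α := ℝ)) (n := j), pow_pos (two_pos (α := ℝ)) k]
  calc exp (-(2 * C * R ^ p / 2 ^ k / 2 / 2 ^ j)) ≤ exp (-(2 * x)) := by
        rw [exp_le_exp, neg_le_neg_iff]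
        calc 2 * x ≤ 2 * (C * R ^ p / 2 ^ (j + k + 1)) := by gcongr
          _ = 2 * C * R ^ p / 2 ^ k / 2 / 2 ^ j := by rw [pow_succ, pow_add]; ring
    _ ≤ 1 - x := exp_neg_two_mul_le_one_sub (by positivity) hx_half
    _ ≤ a (ξ / 2 ^ (j + k + 1)) := ha _

lemma multipliable_apply_div_two_pow (hC : 0 ≤ C) (hp : p ≠ 0) (ha1 : ∀ ξ, a ξ ≤ 1)
    (ha : ∀ ξ, 1 - C * |ξ| ^ p ≤ a ξ) {k : ℕ} {ξ R : ℝ} (hξR : |ξ| ≤ R)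
    (hR : C * R ^ p ≤ 2 ^ k) :
    Multipliable fun j => a (ξ / 2 ^ (j + k + 1)) :=
  multipliable_of_exp_neg_le (summable_geometric_two' _)
    (exp_neg_le_apply_div_two_pow hC hp ha hξR hR) fun _ => ha1 _

lemma exp_neg_le_tprod_apply_div_two_pow (hC : 0 ≤ C) (hp : p ≠ 0) (ha1 : ∀ ξ, a ξ ≤ 1)
    (ha : ∀ ξ, 1 - C * |ξ| ^ p ≤ a ξ) {k : ℕ} {ξ R : ℝ} (hξR : |ξ| ≤ R)
    (hR : C * R ^ p ≤ 2 ^ k) :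
    exp (-C * 2 ^ (-(k : ℝ) + 1) * R ^ p) ≤ ∏' j, a (ξ / 2 ^ (j + k + 1)) := by
  have hpow : (2 : ℝ) ^ (-(k : ℝ) + 1) = 2 / 2 ^ k := by
    rw [rpow_add two_pos, rpow_neg two_pos.le, rpow_natCast, rpow_one, inv_mul_eq_div]
  have h := exp_neg_tsum_le_tprod (summable_geometric_two' _)
    (exp_neg_le_apply_div_two_pow hC hp ha hξR hR) fun _ => ha1 _
  rw [tsum_geometric_two'] at h
  convert h using 2
  rw [hpow]
  ring

lemma prod_abs_le_prod_apply_div_two_pow (hpos : ∀ ξ, |ξ| < π → 0 < a ξ)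
    (hanti : ∀ ξ ζ, |ξ| ≤ |ζ| → |ζ| ≤ π → a ζ ≤ a ξ) {ξ ξ₀ : ℝ} (hξ : |ξ| ≤ |ξ₀|)
    (hξ₀ : |ξ₀| ≤ π) (k : ℕ) :
    ∏ n ∈ Icc 1 k, |a (ξ₀ / 2 ^ n)| ≤ ∏ n ∈ Icc 1 k, a (ξ / 2 ^ n) := by
  refine prod_le_prod (fun _ _ => abs_nonneg _) fun n hn => ?_
  have hn0 : n ≠ 0 := by rw [mem_Icc] at hn; omega
  rw [abs_of_pos (hpos _ (abs_div_two_pow_lt_pi hξ₀ hn0))]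
  refine hanti _ _ ?_ (abs_div_two_pow_lt_pi hξ₀ hn0).le
  simp only [abs_div, abs_pow, abs_two]
  gcongr

theorem prod_mul_exp_le_tprod_apply_div_two_pow (hC : 0 ≤ C) (hp : p ≠ 0)
    (hpos : ∀ ξ, |ξ| < π → 0 < a ξ) (ha1 : ∀ ξ, a ξ ≤ 1) (ha : ∀ ξ, 1 - C * |ξ| ^ p ≤ a ξ)
    (hanti : ∀ ξ ζ, |ξ| ≤ |ζ| → |ζ| ≤ π → a ζ ≤ a ξ) {ξ ξ₀ : ℝ} (hξ : |ξ| ≤ |ξ₀|)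
    (hξ₀ : |ξ₀| ≤ π) {k : ℕ} (hk : C * |ξ₀| ^ p ≤ 2 ^ k) :
    (∏ n ∈ Icc 1 k, |a (ξ₀ / 2 ^ n)|) * exp (-C * 2 ^ (-(k : ℝ) + 1) * |ξ₀| ^ p) ≤
      ∏' j, a (ξ / 2 ^ (j + 1)) := by
  have hsplit := (multipliable_apply_div_two_pow hC hp ha1 ha hξ hk).prod_mul_tprod_nat_mul'
    (f := fun j => a (ξ / 2 ^ (j + 1)))
  have hhead : ∏ n ∈ Icc 1 k, a (ξ / 2 ^ n) = ∏ j ∈ range k, a (ξ / 2 ^ (j + 1)) := by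
    rw [range_eq_Ico, prod_Ico_add' (fun n => a (ξ / 2 ^ n)) 0 k 1]
    rfl
  have hle := prod_abs_le_prod_apply_div_two_pow hpos hanti hξ hξ₀ k
  rw [← hsplit, ← hhead]
  exact mul_le_mul hle (exp_neg_le_tprod_apply_div_two_pow hC hp ha1 ha hξ hk) (exp_pos _).le
    ((prod_nonneg fun _ _ => abs_nonneg _).trans hle)

end Dyadic

lemma pseudoMaskII_eq_pseudoMaskPoly (N l : ℕ) (ξ : ℝ) :
    pseudoMaskII N l ξ = pseudoMaskPoly N l (sin (ξ / 2) ^ 2) := by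
  simp only [pseudoMaskII, pseudoMaskPoly, pow_mul, cos_sq']

lemma pseudoMaskII_pos (N l : ℕ) {ξ : ℝ} (hξ : |ξ| < π) : 0 < pseudoMaskII N l ξ := by
  have hcos : 0 < cos (ξ / 2) :=
    cos_pos_of_mem_Ioo ⟨by linarith [neg_abs_le ξ], by linarith [le_abs_self ξ]⟩
  refine mul_pos (pow_pos hcos _) (sum_pos' (fun j _ => ?_) ⟨0, by simp⟩)
  exact mul_nonneg (Nat.cast_nonneg _) ((even_two_mul j).pow_nonneg _)

lemma pseudoMaskII_le_one {N : ℕ} (hN : 0 < N) (l : ℕ) (ξ : ℝ) : pseudoMaskII N l ξ ≤ 1 := by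
  rw [pseudoMaskII_eq_pseudoMaskPoly, ← pseudoMaskPoly.apply_zero N l]
  exact pseudoMaskPoly.antitoneOn hN l ⟨le_rfl, zero_le_one⟩
    ⟨sq_nonneg _, sin_sq_le_one _⟩ (sq_nonneg _)

lemma pseudoMaskII_le_of_abs_le {N : ℕ} (hN : 0 < N) (l : ℕ) {ξ ζ : ℝ} (h : |ξ| ≤ |ζ|)
    (hζ : |ζ| ≤ π) : pseudoMaskII N l ζ ≤ pseudoMaskII N l ξ := by
  have hsin : sin (ξ / 2) ^ 2 ≤ sin (ζ / 2) ^ 2 := by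
    rw [sin_sq_eq_half_sub, sin_sq_eq_half_sub, two_mul, add_halves, two_mul, add_halves,
      ← cos_abs ξ, ← cos_abs ζ]
    linarith [cos_le_cos_of_nonneg_of_le_pi (abs_nonneg ξ) hζ h]
  rw [pseudoMaskII_eq_pseudoMaskPoly, pseudoMaskII_eq_pseudoMaskPoly]
  exact pseudoMaskPoly.antitoneOn hN l ⟨sq_nonneg _, sin_sq_le_one _⟩
    ⟨sq_nonneg _, sin_sq_le_one _⟩ hsin

/-- The constant `C₁` of the paper. -/
noncomputable def pseudoMaskConst (N l : ℕ) : ℝ :=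
  (∑ j ∈ Icc (l + 1) (N + l), ((N + l).choose j : ℝ)) / 2 ^ (2 * l + 2)

lemma one_sub_le_pseudoMaskII {N : ℕ} (hN : 0 < N) (l : ℕ) (ξ : ℝ) :
    1 - pseudoMaskConst N l * |ξ| ^ (2 * l + 2) ≤ pseudoMaskII N l ξ := by
  set y := sin (ξ / 2) ^ 2
  have hy : y ≤ (|ξ| / 2) ^ 2 := by rw [div_pow, sq_abs, ← div_pow]; exact sin_sq_le_sq
  have hchoose : ((N + l).choose (l + 1) : ℝ) ≤
      ∑ j ∈ Icc (l + 1) (N + l), ((N + l).choose j : ℝ) :=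
    single_le_sum (fun j _ => Nat.cast_nonneg _) (mem_Icc.2 ⟨le_rfl, by omega⟩)
  have hpow : y ^ (l + 1) ≤ |ξ| ^ (2 * l + 2) / 2 ^ (2 * l + 2) := by
    rw [← div_pow, show 2 * l + 2 = 2 * (l + 1) by ring, pow_mul]
    exact pow_le_pow_left₀ (sq_nonneg _) hy _
  rw [pseudoMaskII_eq_pseudoMaskPoly]
  refine le_trans ?_ (pseudoMaskPoly.one_sub_le hN l ⟨sq_nonneg _, sin_sq_le_one _⟩)
  rw [pseudoMaskConst, div_mul_eq_mul_div, mul_div_assoc]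
  gcongr

theorem pseudo_spline_FT_lower_bound_general (N l : ℕ) (hlN : l < N)
    (K : Set ℝ) (hK : K ⊆ Set.Icc (-π) π) (ξ₀ : ℝ) (hξ₀ : ξ₀ ∈ K)
    (hmax : ∀ ξ ∈ K, |ξ| ≤ |ξ₀|) :
    ∃ k₀ : ℕ, 0 < k₀ ∧
      (0 < (∏ k ∈ Finset.Icc 1 k₀, |pseudoMaskII N l (ξ₀ / 2 ^ k)|) *
          Real.exp (-((∑ j ∈ Finset.Icc (l + 1) (N + l), ((N + l).choose j : ℝ)) / 2 ^ (2 * l + 2)) *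
            2 ^ (-(k₀ : ℝ) + 1) * |ξ₀| ^ (2 * l + 2))) ∧
      ∀ ξ ∈ K, |pseudoSplineFT N l ξ| ≥
        (∏ k ∈ Finset.Icc 1 k₀, |pseudoMaskII N l (ξ₀ / 2 ^ k)|) *
          Real.exp (-((∑ j ∈ Finset.Icc (l + 1) (N + l), ((N + l).choose j : ℝ)) / 2 ^ (2 * l + 2)) *
            2 ^ (-(k₀ : ℝ) + 1) * |ξ₀| ^ (2 * l + 2)) := by
  have hN : 0 < N := l.zero_le.trans_lt hlN
  have hξ₀π : |ξ₀| ≤ π := abs_le.2 (hK hξ₀)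
  have hC : 0 ≤ pseudoMaskConst N l := by unfold pseudoMaskConst; positivity
  obtain ⟨k, hk⟩ :=
    pow_unbounded_of_one_lt (pseudoMaskConst N l * |ξ₀| ^ (2 * l + 2)) one_lt_two
  refine ⟨k + 1, k.succ_pos, ?_, fun ξ hξ => ?_⟩
  · refine mul_pos (prod_pos fun n hn => abs_pos.2 (pseudoMaskII_pos N l ?_).ne') (exp_pos _)
    exact abs_div_two_pow_lt_pi hξ₀π (by rw [mem_Icc] at hn; omega)
  · refine le_trans ?_ (le_abs_self _)
    exact prod_mul_exp_le_tprod_apply_div_two_pow hC (by omega) (fun _ => pseudoMaskII_pos N l)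
      (pseudoMaskII_le_one hN l) (one_sub_le_pseudoMaskII hN l)
      (fun _ _ => pseudoMaskII_le_of_abs_le hN l) (hmax ξ hξ) hξ₀π
      (hk.le.trans (pow_le_pow_right₀ one_le_two k.le_succ))

theorem pseudo_spline_FT_lower_bound (N l : ℕ) (hl : 0 < l) (hlN : l < N)
    (K : Set ℝ) (hK : K ⊆ Set.Icc (-π) π) (ξ₀ : ℝ) (hξ₀ : ξ₀ ∈ K)
    (hmax : ∀ ξ ∈ K, |ξ| ≤ |ξ₀|) :
    ∃ k₀ : ℕ, 0 < k₀ ∧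
      (0 < (∏ k ∈ Finset.Icc 1 k₀, |pseudoMaskII N l (ξ₀ / 2 ^ k)|) *
          Real.exp (-((∑ j ∈ Finset.Icc (l + 1) (N + l), ((N + l).choose j : ℝ)) / 2 ^ (2 * l + 2)) *
            2 ^ (-(k₀ : ℝ) + 1) * |ξ₀| ^ (2 * l + 2))) ∧
      ∀ ξ ∈ K, |pseudoSplineFT N l ξ| ≥
        (∏ k ∈ Finset.Icc 1 k₀, |pseudoMaskII N l (ξ₀ / 2 ^ k)|) *
          Real.exp (-((∑ j ∈ Finset.Icc (l + 1) (N + l), ((N + l).choose j : ℝ)) / 2 ^ (2 * l + 2)) *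
            2 ^ (-(k₀ : ℝ) + 1) * |ξ₀| ^ (2 * l + 2)) :=
  pseudo_spline_FT_lower_bound_general N l hlN K hK ξ₀ hξ₀ hmax
end

section
/- For positive integers N, l with l < N, the mask of the pseudo spline of type II satisfies â(ξ) ≥ 0 for all ξ, â is decreasing on [0, π], and â(0) = 1, â(π) = 0. -/
/-!
With `y = sin² (ξ / 2)` the mask becomes `g y = (1 - y) ^ N * ∑_{j ≤ l} C(N-1+j, j) y ^ j`.
Because `(j + 1) C(N+j, j+1) = (N + j) C(N-1+j, j)`, the derivative telescopes to
`g' y = -(N + l) C(N-1+l, l) (1 - y) ^ (N - 1) y ^ l`, which is `≤ 0` on `[0, 1]`;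
and `ξ ↦ sin² (ξ / 2)` increases from `0` to `1` on `[0, π]`.
-/

open Real Finset

namespace PseudoMaskII

noncomputable def sumPart (N l : ℕ) (y : ℝ) : ℝ :=
  ∑ j ∈ range (l + 1), ((N - 1 + j).choose j : ℝ) * y ^ j

noncomputable def sumPartDeriv (N l : ℕ) (y : ℝ) : ℝ :=
  ∑ j ∈ range (l + 1), ((N - 1 + j).choose j : ℝ) * (j * y ^ (j - 1))

noncomputable def poly (N l : ℕ) (y : ℝ) : ℝ :=
  (1 - y) ^ N * sumPart N l y

theorem pseudoMaskII_eq_poly (N l : ℕ) (ξ : ℝ) :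
    pseudoMaskII N l ξ = poly N l (sin (ξ / 2) ^ 2) := by
  simp only [pseudoMaskII, poly, sumPart, ← cos_sq', pow_mul]

theorem hasDerivAt_sumPart (N l : ℕ) (y : ℝ) :
    HasDerivAt (sumPart N l) (sumPartDeriv N l y) y :=
  HasDerivAt.fun_sum fun j _ => (hasDerivAt_pow j y).const_mul _

theorem succ_mul_choose_succ {N : ℕ} (hN : 0 < N) (j : ℕ) :
    ((j : ℝ) + 1) * ((N - 1 + (j + 1)).choose (j + 1) : ℝ) =
      ((N : ℝ) + j) * ((N - 1 + j).choose j : ℝ) := by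
  have h := Nat.add_one_mul_choose_eq (N - 1 + j) j
  rw [show N - 1 + j + 1 = N + j by omega] at h
  rw [show N - 1 + (j + 1) = N + j by omega, mul_comm]
  exact_mod_cast h.symm

theorem one_sub_mul_sumPartDeriv_sub {N : ℕ} (hN : 0 < N) (l : ℕ) (y : ℝ) :
    (1 - y) * sumPartDeriv N l y - N * sumPart N l y =
      -(((N : ℝ) + l) * ((N - 1 + l).choose l : ℝ)) * y ^ l := by
  induction l with
  | zero => simp [sumPart, sumPartDeriv]
  | succ l ih =>
    simp only [sumPart, sumPartDeriv] at ih ⊢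
    rw [sum_range_succ _ (l + 1), sum_range_succ _ (l + 1), Nat.add_sub_cancel]
    push_cast
    linear_combination ih + y ^ l * succ_mul_choose_succ hN l

theorem hasDerivAt_poly {N : ℕ} (hN : 0 < N) (l : ℕ) (y : ℝ) :
    HasDerivAt (poly N l)
      (-(((N : ℝ) + l) * ((N - 1 + l).choose l : ℝ)) * ((1 - y) ^ (N - 1) * y ^ l)) y := by
  have hpow : HasDerivAt (fun y : ℝ => (1 - y) ^ N) (-(N * (1 - y) ^ (N - 1))) y := by
    simpa using ((hasDerivAt_id y).const_sub 1).fun_pow N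
  refine (hpow.fun_mul (hasDerivAt_sumPart N l y)).congr_deriv ?_
  have key := one_sub_mul_sumPartDeriv_sub hN l y
  obtain ⟨n, rfl⟩ : ∃ n, N = n + 1 := ⟨N - 1, by omega⟩
  simp only [Nat.add_sub_cancel] at key ⊢
  linear_combination (1 - y) ^ n * key

theorem poly_antitoneOn {N : ℕ} (hN : 0 < N) (l : ℕ) :
    AntitoneOn (poly N l) (Set.Icc 0 1) := by
  have hderiv := hasDerivAt_poly hN l
  apply antitoneOn_of_deriv_nonpos (convex_Icc 0 1)
  · exact (continuous_iff_continuousAt.2 fun y => (hderiv y).continuousAt).continuousOn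
  · exact fun y _ => (hderiv y).differentiableAt.differentiableWithinAt
  · intro y hy
    rw [interior_Icc] at hy
    rw [(hderiv y).deriv, neg_mul]
    refine neg_nonpos.2 (mul_nonneg (by positivity) (mul_nonneg ?_ ?_))
    · exact pow_nonneg (by linarith [hy.2]) _
    · exact pow_nonneg hy.1.le _

theorem sin_half_sq_monotoneOn : MonotoneOn (fun ξ => sin (ξ / 2) ^ 2) (Set.Icc 0 π) := by
  intro a ha b hb hab
  have hsin_nonneg : 0 ≤ sin (a / 2) :=
    sin_nonneg_of_nonneg_of_le_pi (by linarith [ha.1]) (by linarith [ha.2, pi_pos])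
  have hsin_le : sin (a / 2) ≤ sin (b / 2) :=
    strictMonoOn_sin.monotoneOn ⟨by linarith [ha.1, pi_pos], by linarith [ha.2]⟩
      ⟨by linarith [hb.1, pi_pos], by linarith [hb.2]⟩ (by linarith)
  exact pow_le_pow_left₀ hsin_nonneg hsin_le 2

theorem sin_half_sq_mem_Icc (ξ : ℝ) : sin (ξ / 2) ^ 2 ∈ Set.Icc (0 : ℝ) 1 :=
  ⟨sq_nonneg _, sin_sq_le_one _⟩

end PseudoMaskII

open PseudoMaskII in
theorem pseudo_spline_mask_properties_general (N l : ℕ) (hlN : l < N) :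
    (∀ ξ : ℝ, 0 ≤ pseudoMaskII N l ξ) ∧
    AntitoneOn (pseudoMaskII N l) (Set.Icc 0 π) ∧
    pseudoMaskII N l 0 = 1 ∧
    pseudoMaskII N l π = 0 := by
  have hN : 0 < N := Nat.zero_lt_of_lt hlN
  refine ⟨fun ξ => ?_, ?_, ?_, ?_⟩
  · unfold pseudoMaskII
    exact mul_nonneg ((even_two_mul N).pow_nonneg _)
      (sum_nonneg fun j _ => mul_nonneg (Nat.cast_nonneg _) ((even_two_mul j).pow_nonneg _))
  · have h := (poly_antitoneOn hN l).comp_MonotoneOn sin_half_sq_monotoneOn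
      fun ξ _ => sin_half_sq_mem_Icc ξ
    simpa only [Function.comp_def, ← pseudoMaskII_eq_poly] using h
  · simp [pseudoMaskII, sum_range_succ']
  · simp [pseudoMaskII, hN.ne']

theorem pseudo_spline_mask_properties (N l : ℕ) (hl : 0 < l) (hlN : l < N) :
    (∀ ξ : ℝ, 0 ≤ pseudoMaskII N l ξ) ∧
    AntitoneOn (pseudoMaskII N l) (Set.Icc 0 π) ∧
    pseudoMaskII N l 0 = 1 ∧
    pseudoMaskII N l π = 0 :=
  pseudo_spline_mask_properties_general N l hlN
end

section
/- Let 0 < α < π/2 and let Ω = {(ξ₁,ξ₂) ∈ ℝ² : ξ₁ ∈ [−2α,−α] ∪ [α,2α], ξ₂ ∈ [−α,α]}. Let A_{2^j} = diag(2^j, 2^{j/2}) and S_k = [[1,k],[0,1]]. Then ⋃_{j≥0} ⋃_{|k| ≤ ⌈2^{j/2}⌉} A_{2^j} S_kᵀ Ω covers the horizontal cone 𝒞 = {(ξ₁,ξ₂) : |ξ₁| ≥ α, |ξ₂/ξ₁| ≤ 1}. -/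
/-!
Write `ξ = (x, y)`. The dyadic scale `j` is chosen with `α ≤ |x| / 2^j ≤ 2α`, which puts
`ω₁ = x / 2^j` in the two intervals. The shear then absorbs `y`: with `Q = 2^(j/2)`, rounding
`t = y / (Q ω₁)` to the nearest integer `k` leaves the remainder `ω₂ = (t - k) ω₁` of size at most
`|ω₁| / 2 ≤ α`, and the cone condition `|y| ≤ |x| = Q² |ω₁|` gives `|t| ≤ Q`, hence `|k| ≤ ⌈Q⌉₊`.
-/

open Real Set

lemma abs_round_le_natCeil {t Q : ℝ} (ht : |t| ≤ Q) : |((round t : ℤ) : ℝ)| ≤ ⌈Q⌉₊ := by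
  have h_round : |((round t : ℤ) : ℝ)| ≤ |t| + 1 / 2 := by
    have := abs_sub_abs_le_abs_sub ((round t : ℤ) : ℝ) t
    rw [abs_sub_comm] at this
    linarith [abs_sub_round t]
  have h_lt : |round t| < (⌈Q⌉₊ : ℤ) + 1 := by
    have : |((round t : ℤ) : ℝ)| < ⌈Q⌉₊ + 1 := by linarith [Nat.le_ceil Q]
    exact_mod_cast this
  exact_mod_cast Int.lt_add_one_iff.mp h_lt

lemma exists_int_abs_sub_mul_le {v w Q : ℝ} (hw : w ≠ 0) (hv : |v| ≤ Q * |w|) :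
    ∃ k : ℤ, |(k : ℝ)| ≤ ⌈Q⌉₊ ∧ |v - k * w| ≤ |w| / 2 := by
  refine ⟨round (v / w), abs_round_le_natCeil ?_, ?_⟩
  · rwa [abs_div, div_le_iff₀ (abs_pos.mpr hw)]
  · have h_eq : v - (round (v / w) : ℝ) * w = (v / w - round (v / w)) * w := by field_simp
    rw [h_eq, abs_mul]
    nlinarith [abs_sub_round (v / w), abs_nonneg w]

lemma exists_abs_div_two_pow_mem_Icc {α x : ℝ} (hα : 0 < α) (hx : α ≤ |x|) :
    ∃ j : ℕ, α ≤ |x / 2 ^ j| ∧ |x / 2 ^ j| ≤ 2 * α := by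
  obtain ⟨j, h_lo, h_hi⟩ := exists_nat_pow_near ((one_le_div hα).mpr hx) one_lt_two
  have h_pow : (0 : ℝ) < 2 ^ j := by positivity
  refine ⟨j, ?_, ?_⟩
  · rw [abs_div, abs_of_pos h_pow, le_div_iff₀ h_pow]
    rw [le_div_iff₀ hα] at h_lo
    linarith
  · rw [abs_div, abs_of_pos h_pow, div_le_iff₀ h_pow]
    rw [div_lt_iff₀ hα, pow_succ] at h_hi
    linarith

lemma mem_Icc_neg_union_Icc_of_abs_mem {a b w : ℝ} (ha : a ≤ |w|) (hb : |w| ≤ b) :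
    w ∈ Icc (-b) (-a) ∪ Icc a b := by
  rcases le_or_gt 0 w with hw | hw
  · rw [abs_of_nonneg hw] at ha hb
    exact Or.inr ⟨ha, hb⟩
  · rw [abs_of_neg hw] at ha hb
    exact Or.inl ⟨by linarith, by linarith⟩

lemma two_rpow_half_mul_self (j : ℕ) :
    (2 : ℝ) ^ ((j : ℝ) / 2) * (2 : ℝ) ^ ((j : ℝ) / 2) = 2 ^ j := by
  rw [← rpow_add two_pos, add_halves, rpow_natCast]

theorem shearlet_cone_covering_general (α : ℝ) (hα0 : 0 < α) :
    ∀ ξ : ℝ × ℝ, α ≤ |ξ.1| → |ξ.2 / ξ.1| ≤ 1 →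
      ∃ j : ℕ, ∃ k : ℤ, (|k| : ℝ) ≤ ⌈(2 : ℝ) ^ ((j : ℝ) / 2)⌉₊ ∧
        ∃ ω : ℝ × ℝ,
          (ω.1 ∈ Set.Icc (-2 * α) (-α) ∪ Set.Icc α (2 * α)) ∧
          ω.2 ∈ Set.Icc (-α) α ∧
          ξ.1 = 2 ^ j * ω.1 ∧
          ξ.2 = (2 : ℝ) ^ ((j : ℝ) / 2) * ((k : ℝ) * ω.1 + ω.2) := by
  rintro ⟨x, y⟩ hx hyx
  dsimp only at hx hyx ⊢
  obtain ⟨j, hω₁_lo, hω₁_hi⟩ := exists_abs_div_two_pow_mem_Icc hα0 hx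
  set ω₁ := x / 2 ^ j
  set Q : ℝ := 2 ^ ((j : ℝ) / 2)
  have hQ : 0 < Q := by positivity
  have hω₁ : ω₁ ≠ 0 := abs_pos.mp (hα0.trans_le hω₁_lo)
  have hx_eq : x = 2 ^ j * ω₁ := (mul_div_cancel₀ x (by positivity)).symm
  have hy : |y / Q| ≤ Q * |ω₁| := by
    rw [abs_div, div_le_one (hα0.trans_le hx)] at hyx
    rw [abs_div, abs_of_pos hQ, div_le_iff₀ hQ]
    calc |y| ≤ |x| := hyx
      _ = Q * |ω₁| * Q := by
        rw [hx_eq, ← two_rpow_half_mul_self, abs_mul, abs_of_pos (mul_pos hQ hQ)]; ring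
  obtain ⟨k, hk, hω₂⟩ := exists_int_abs_sub_mul_le hω₁ hy
  refine ⟨j, k, by exact_mod_cast hk, ⟨ω₁, y / Q - k * ω₁⟩, ?_, abs_le.mp (by linarith), hx_eq, ?_⟩
  · simpa only [neg_mul] using mem_Icc_neg_union_Icc_of_abs_mem hω₁_lo hω₁_hi
  · field_simp
    ring

theorem shearlet_cone_covering (α : ℝ) (hα0 : 0 < α) (hαπ : α < π / 2) :
    ∀ ξ : ℝ × ℝ, α ≤ |ξ.1| → |ξ.2 / ξ.1| ≤ 1 →
      ∃ j : ℕ, ∃ k : ℤ, (|k| : ℝ) ≤ ⌈(2 : ℝ) ^ ((j : ℝ) / 2)⌉₊ ∧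
        ∃ ω : ℝ × ℝ,
          (ω.1 ∈ Set.Icc (-2 * α) (-α) ∪ Set.Icc α (2 * α)) ∧
          ω.2 ∈ Set.Icc (-α) α ∧
          ξ.1 = 2 ^ j * ω.1 ∧
          ξ.2 = (2 : ℝ) ^ ((j : ℝ) / 2) * ((k : ℝ) * ω.1 + ω.2) :=
  shearlet_cone_covering_general α hα0
end
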